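/- Let Γ be an m×m real matrix that is asymptotically stable. Then the matrix 𝓘 := ∫₀^∞ exp(tΓ) · exp(tΓᵀ) dt is well defined (the integrand is integrable on [0,∞)) and satisfies Γ·𝓘 + 𝓘·Γᵀ = −I_m, where I_m is the m×m identity matrix. -/

import Mathlib

/-!
On the generalized eigenspace of `Γ` for `μ`, `exp (tΓ)` acts as `e^{tμ}` times a polynomial
in `t`. The vectors `v` with `exp (tΓ) v = O(e^{ct})` form a subspace, which therefore contains
every generalized eigenspace, hence all of `ℂᵐ`, as soon as `c` exceeds the real parts of all
eigenvalues; stability provides such a `c < 0`. So `F t = exp (tΓ) exp (tΓᵀ)` is integrable on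
`[0, ∞)` and tends to `0`, and integrating `F' = Γ F + F Γᵀ` over `[0, ∞)` gives
`Γ 𝓘 + 𝓘 Γᵀ = -F 0 = -1`.
-/

open MeasureTheory NormedSpace Matrix

attribute [local instance] Matrix.normedAddCommGroup Matrix.normedSpace

instance Matrix.realContinuousENorm {m n : Type*} [Fintype m] [Fintype n] :
    ContinuousENorm (Matrix m n ℝ) :=
  SeminormedAddGroup.toContinuousENorm

/-- A square real matrix is asymptotically stable if every eigenvalue (over `ℂ`) has
strictly negative real part. -/
def IsAsymptoticallyStable {m : ℕ} (Γ : Matrix (Fin m) (Fin m) ℝ) : Prop :=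
  ∀ μ ∈ spectrum ℂ (Γ.map Complex.ofReal), μ.re < 0

open Asymptotics Filter Topology Finset

theorem Real.isLittleO_pow_mul_exp_mul_of_lt {b c : ℝ} (hbc : b < c) (k : ℕ) :
    (fun t : ℝ => t ^ k * Real.exp (b * t)) =o[atTop] fun t => Real.exp (c * t) := by
  have h := (isLittleO_pow_exp_pos_mul_atTop k (sub_pos.2 hbc)).mul_isBigO
    (isBigO_refl (fun t => Real.exp (b * t)) atTop)
  simpa only [← Real.exp_add, ← add_mul, sub_add_cancel] using h

theorem Complex.isBigO_pow_mul_exp_mul_of_re_lt {μ : ℂ} {c : ℝ} (hμ : μ.re < c) (k : ℕ) :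
    (fun t : ℝ => (t : ℂ) ^ k * Complex.exp (t * μ)) =O[atTop] fun t => Real.exp (c * t) := by
  rw [← isBigO_norm_left]
  refine (Real.isLittleO_pow_mul_exp_mul_of_lt hμ k).isBigO.congr' ?_ .rfl
  filter_upwards [eventually_ge_atTop 0] with t ht
  simp [Complex.norm_exp, abs_of_nonneg ht, mul_comm]

theorem Asymptotics.IsBigO.matrix_mul {α R l m n : Type*} [NormedRing R] [NormMulClass R]
    [Fintype l] [Fintype m] [Fintype n] {f : α → Matrix l m R} {g : α → Matrix m n R}
    {u v : α → ℝ} {L : Filter α} (hf : f =O[L] u) (hg : g =O[L] v) :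
    (fun x => f x * g x) =O[L] fun x => u x * v x := by
  refine isBigO_pi.2 fun i => isBigO_pi.2 fun j => ?_
  simp only [mul_apply]
  exact IsBigO.fun_sum fun k _ =>
    (isBigO_pi.1 (isBigO_pi.1 hf i) k).mul (isBigO_pi.1 (isBigO_pi.1 hg k) j)

def Matrix.isBigOMulVecSubmodule {α 𝕜 m n : Type*} [NormedField 𝕜] [Fintype m] [Fintype n]
    (l : Filter α) (M : α → Matrix m n 𝕜) (g : α → ℝ) : Submodule 𝕜 (n → 𝕜) where
  carrier := {v | (fun x => M x *ᵥ v) =O[l] g}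
  zero_mem' := show (fun x => M x *ᵥ 0) =O[l] g by simpa only [mulVec_zero] using isBigO_zero g l
  add_mem' {v w} hv hw := show (fun x => M x *ᵥ (v + w)) =O[l] g by
    simpa only [mulVec_add] using hv.add hw
  smul_mem' c v hv := (hv.const_smul_left c).congr_left fun x => (mulVec_smul (M x) c v).symm

theorem MeasureTheory.integrableOn_Ici_of_isBigO_exp {E : Type*} [NormedAddCommGroup E]
    {f : ℝ → E} {a c : ℝ} (hc : c < 0) (hf : ContinuousOn f (Set.Ici a))
    (ho : f =O[atTop] fun t => Real.exp (c * t)) : IntegrableOn f (Set.Ici a) :=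
  (hf.locallyIntegrableOn measurableSet_Ici).integrableOn_of_isBigO_atTop ho
    ⟨Set.Ioi 0, Ioi_mem_atTop 0, by simpa using exp_neg_integrableOn_Ioi 0 (neg_pos.2 hc)⟩

section MatrixIntegral

variable {α l m p : Type*} [Fintype l] [Fintype m] [Fintype p] [MeasurableSpace α] {μ : Measure α}

theorem MeasureTheory.Integrable.matrix_const_mul (X : Matrix l m ℝ) {f : α → Matrix m p ℝ}
    (hf : Integrable f μ) : Integrable (fun a => X * f a) μ :=
  (mulLeftLinearMap p ℝ X).toContinuousLinearMap.integrable_comp hf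

theorem MeasureTheory.Integrable.matrix_mul_const (Y : Matrix m p ℝ) {f : α → Matrix l m ℝ}
    (hf : Integrable f μ) : Integrable (fun a => f a * Y) μ :=
  (mulRightLinearMap l ℝ Y).toContinuousLinearMap.integrable_comp hf

theorem MeasureTheory.integral_matrix_const_mul (X : Matrix l m ℝ) {f : α → Matrix m p ℝ}
    (hf : Integrable f μ) : ∫ a, X * f a ∂μ = X * ∫ a, f a ∂μ :=
  (mulLeftLinearMap p ℝ X).toContinuousLinearMap.integral_comp_comm hf

theorem MeasureTheory.integral_matrix_mul_const (Y : Matrix m p ℝ) {f : α → Matrix l m ℝ}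
    (hf : Integrable f μ) : ∫ a, f a * Y ∂μ = (∫ a, f a ∂μ) * Y :=
  (mulRightLinearMap l ℝ Y).toContinuousLinearMap.integral_comp_comm hf

end MatrixIntegral

section SquareMatrix

variable {n : Type*} [Fintype n] [DecidableEq n]

section OperatorNorm

/- The entrywise sup norm is not submultiplicative, so the Banach-algebra facts about `exp` are
used with the operator norm; none of the statements below depends on the norm. -/
attribute [-instance] Matrix.normedAddCommGroup Matrix.normedSpace
attribute [local instance] Matrix.linftyOpNormedRing Matrix.linftyOpNormedAlgebra

theorem Matrix.exp_mulVec_of_pow_mulVec_eq_zero {𝕂 : Type*} [RCLike 𝕂] {N : Matrix n n 𝕂}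
    {w : n → 𝕂} {k : ℕ} (h : N ^ k *ᵥ w = 0) :
    exp N *ᵥ w = ∑ i ∈ range k, (i.factorial⁻¹ : 𝕂) • (N ^ i *ᵥ w) := by
  have hs : HasSum (fun i : ℕ => (i.factorial⁻¹ : 𝕂) • (N ^ i *ᵥ w)) (exp N *ᵥ w) := by
    convert (exp_series_hasSum_exp' (𝕂 := 𝕂) N).map
      (AddMonoidHom.mk' (· *ᵥ w) fun A B => add_mulVec A B w)
      (continuous_id.matrix_mulVec continuous_const) using 1
    · exact funext fun i => (smul_mulVec _ _ _).symm
    · rfl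
  refine hs.unique (hasSum_sum_of_ne_finset_zero fun i hi => ?_)
  rw [← Nat.sub_add_cancel (not_lt.mp (mem_range.not.mp hi)), pow_add, ← mulVec_mulVec, h,
    mulVec_zero, smul_zero]

theorem Matrix.exp_eq_exp_smul_exp_sub (A : Matrix n n ℂ) (μ : ℂ) :
    exp A = Complex.exp μ • exp (A - μ • 1) := by
  calc exp A = exp (A - μ • 1 + algebraMap ℂ (Matrix n n ℂ) μ) := by
        rw [Algebra.algebraMap_eq_smul_one, sub_add_cancel]
    _ = exp (A - μ • 1) * exp (algebraMap ℂ (Matrix n n ℂ) μ) :=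
        NormedSpace.exp_add_of_commute (Algebra.commutes μ _).symm
    -- after the rewrite, the sides differ only in instance paths (operator norm vs. entrywise)
    _ = exp (A - μ • 1) * algebraMap ℂ (Matrix n n ℂ) (exp μ) := by
        rw [algebraMap_exp_comm]; rfl
    _ = Complex.exp μ • exp (A - μ • 1) := by
        rw [← Algebra.commutes, ← Algebra.smul_def, Complex.exp_eq_exp_ℂ]

theorem Matrix.map_ofReal_exp (A : Matrix n n ℝ) :
    (exp A).map Complex.ofReal = exp (A.map Complex.ofReal) :=
  map_exp Complex.ofRealHom.mapMatrix (continuous_id.matrix_map Complex.continuous_ofReal) A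

theorem Matrix.hasDerivAt_exp_smul_mul_exp_smul (A B : Matrix n n ℝ) (t : ℝ) :
    HasDerivAt (fun s : ℝ => exp (s • A) * exp (s • B))
      (A * (exp (t • A) * exp (t • B)) + exp (t • A) * exp (t • B) * B) t := by
  have h := (hasDerivAt_exp_smul_const' A t).mul (hasDerivAt_exp_smul_const B t)
  simp only [mul_assoc] at h ⊢
  exact h

end OperatorNorm

theorem Matrix.exp_smul_mulVec_eq_sum {A : Matrix n n ℂ} {μ : ℂ} {w : n → ℂ} {k : ℕ}
    (h : (A - μ • 1) ^ k *ᵥ w = 0) (t : ℂ) :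
    exp (t • A) *ᵥ w =
      ∑ i ∈ range k, (t ^ i / i.factorial * Complex.exp (t * μ)) • ((A - μ • 1) ^ i *ᵥ w) := by
  have hN : (t • (A - μ • 1)) ^ k *ᵥ w = 0 := by rw [smul_pow, smul_mulVec, h, smul_zero]
  rw [exp_eq_exp_smul_exp_sub _ (t * μ), ← smul_smul, ← smul_sub, smul_mulVec,
    exp_mulVec_of_pow_mulVec_eq_zero hN, smul_sum]
  refine sum_congr rfl fun i _ => ?_
  rw [smul_pow, smul_mulVec, smul_smul, smul_smul]
  congr 1
  ring

theorem Matrix.pow_sub_smul_one_mulVec_eq_zero_of_toLin' {K : Type*} [Field K]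
    {A : Matrix n n K} {μ : K} {w : n → K} {k : ℕ} (hw : ((toLin' A - μ • 1) ^ k) w = 0) :
    (A - μ • 1) ^ k *ᵥ w = 0 := by
  rw [← toLin'_apply]
  show toLinAlgEquiv' ((A - μ • 1) ^ k) w = 0
  rwa [map_pow, map_sub, map_smul, map_one]

theorem Matrix.mem_spectrum_of_mem_maxGenEigenspace {K : Type*} [Field K] {A : Matrix n n K}
    {μ : K} {w : n → K} (hw : w ∈ Module.End.maxGenEigenspace (toLin' A) μ) (hw0 : w ≠ 0) :
    μ ∈ spectrum K A := by
  rw [← spectrum_toLin', ← Module.End.hasEigenvalue_iff_mem_spectrum]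
  exact Module.End.HasUnifEigenvalue.lt zero_lt_one ((Submodule.ne_bot_iff _).mpr ⟨w, hw, hw0⟩)

theorem Matrix.isBigO_exp_smul_mulVec_of_pow_sub_mulVec_eq_zero {A : Matrix n n ℂ} {μ : ℂ}
    {w : n → ℂ} {k : ℕ} (h : (A - μ • 1) ^ k *ᵥ w = 0) {c : ℝ} (hμ : μ.re < c) :
    (fun t : ℝ => exp ((t : ℂ) • A) *ᵥ w) =O[atTop] fun t => Real.exp (c * t) := by
  simp_rw [exp_smul_mulVec_eq_sum h]
  refine IsBigO.fun_sum fun i _ => ?_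
  have hterm := ((Complex.isBigO_pow_mul_exp_mul_of_re_lt hμ i).const_mul_left
    (i.factorial : ℂ)⁻¹).smul
    (isBigO_const_const ((A - μ • 1) ^ i *ᵥ w) (one_ne_zero (α := ℝ)) atTop)
  simpa only [smul_eq_mul, mul_one, ← mul_assoc, inv_mul_eq_div] using hterm

theorem Matrix.isBigO_exp_ofReal_smul_mulVec {A : Matrix n n ℂ} {c : ℝ}
    (hA : ∀ μ ∈ spectrum ℂ A, μ.re < c) (v : n → ℂ) :
    (fun t : ℝ => exp ((t : ℂ) • A) *ᵥ v) =O[atTop] fun t => Real.exp (c * t) := by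
  suffices ⊤ ≤ isBigOMulVecSubmodule atTop (fun t : ℝ => exp ((t : ℂ) • A))
      (fun t => Real.exp (c * t)) from this Submodule.mem_top
  rw [← Module.End.iSup_maxGenEigenspace_eq_top (toLin' A)]
  refine iSup_le fun μ w hw => ?_
  rcases eq_or_ne w 0 with rfl | hw0
  · exact zero_mem _
  obtain ⟨k, hk⟩ := (Module.End.mem_maxGenEigenspace _ _ _).mp hw
  exact isBigO_exp_smul_mulVec_of_pow_sub_mulVec_eq_zero
    (pow_sub_smul_one_mulVec_eq_zero_of_toLin' hk)
    (hA μ (mem_spectrum_of_mem_maxGenEigenspace hw hw0))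

theorem Matrix.isBigO_exp_ofReal_smul {A : Matrix n n ℂ} {c : ℝ}
    (hA : ∀ μ ∈ spectrum ℂ A, μ.re < c) :
    (fun t : ℝ => exp ((t : ℂ) • A)) =O[atTop] fun t => Real.exp (c * t) := by
  refine isBigO_pi.2 fun i => isBigO_pi.2 fun j => ?_
  simpa [mulVec_single] using isBigO_pi.1 (isBigO_exp_ofReal_smul_mulVec hA (Pi.single j 1)) i

theorem Matrix.isBigO_exp_smul {Γ : Matrix n n ℝ} {c : ℝ}
    (hΓ : ∀ μ ∈ spectrum ℂ (Γ.map Complex.ofReal), μ.re < c) :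
    (fun t : ℝ => exp (t • Γ)) =O[atTop] fun t => Real.exp (c * t) := by
  refine IsBigO.of_norm_left ((isBigO_norm_left.2 (isBigO_exp_ofReal_smul hΓ)).congr_left
    fun t => ?_)
  have : (t : ℂ) • Γ.map Complex.ofReal = (t • Γ).map Complex.ofReal := by ext; simp
  rw [this, ← map_ofReal_exp, norm_map_eq _ _ Complex.norm_real]

theorem Matrix.mul_integral_exp_mul_exp_add_integral_mul_eq_neg_one {A B : Matrix n n ℝ}
    (hint : IntegrableOn (fun t : ℝ => exp (t • A) * exp (t • B)) (Set.Ioi 0))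
    (hlim : Tendsto (fun t : ℝ => exp (t • A) * exp (t • B)) atTop (𝓝 0)) :
    A * (∫ t in Set.Ioi (0 : ℝ), exp (t • A) * exp (t • B)) +
      (∫ t in Set.Ioi (0 : ℝ), exp (t • A) * exp (t • B)) * B = -1 := by
  have hftc := integral_Ioi_of_hasDerivAt_of_tendsto'
    (fun t _ => hasDerivAt_exp_smul_mul_exp_smul A B t)
    ((hint.matrix_const_mul A).add (hint.matrix_mul_const B)) hlim
  rwa [integral_add (hint.matrix_const_mul A) (hint.matrix_mul_const B),
    integral_matrix_const_mul A hint, integral_matrix_mul_const B hint, zero_smul, zero_smul,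
    exp_zero, mul_one, zero_sub] at hftc

end SquareMatrix

theorem IsAsymptoticallyStable.exists_re_lt {m : ℕ} {Γ : Matrix (Fin m) (Fin m) ℝ}
    (hΓ : IsAsymptoticallyStable Γ) :
    ∃ c < 0, ∀ μ ∈ spectrum ℂ (Γ.map Complex.ofReal), μ.re < c := by
  obtain ⟨δ, hδ, h⟩ := (Matrix.finite_spectrum _).isCompact.exists_forall_le'
    Complex.continuous_re.neg.continuousOn fun μ hμ => neg_pos.2 (hΓ μ hμ)
  exact ⟨-δ / 2, by linarith, fun μ hμ => by linarith [show δ ≤ -μ.re from h μ hμ]⟩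

theorem IsAsymptoticallyStable.exists_isBigO_exp_mul_exp_transpose {m : ℕ}
    {Γ : Matrix (Fin m) (Fin m) ℝ} (hΓ : IsAsymptoticallyStable Γ) :
    ∃ c < 0, (fun t : ℝ => exp (t • Γ) * exp (t • Γᵀ)) =O[atTop] fun t => Real.exp (c * t) := by
  obtain ⟨c, hc, hre⟩ := hΓ.exists_re_lt
  have hexp := isBigO_exp_smul hre
  have hexpT : (fun t : ℝ => exp (t • Γᵀ)) =O[atTop] fun t => Real.exp (c * t) := by
    refine IsBigO.of_norm_left ((isBigO_norm_left.2 hexp).congr_left fun t => ?_)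
    rw [← transpose_smul, exp_transpose, norm_transpose]
  refine ⟨2 * c, by linarith, (hexp.matrix_mul hexpT).congr_right fun t => ?_⟩
  rw [← Real.exp_add]
  ring_nf

/-- For `Γ` asymptotically stable, the matrix `𝓘 = ∫₀^∞ exp(tΓ) exp(tΓᵀ) dt` is well
defined (the integrand is integrable on `[0,∞)`) and satisfies `Γ 𝓘 + 𝓘 Γᵀ = −I`. -/
theorem integral_exp_mul_exp_transpose {m : ℕ} (Γ : Matrix (Fin m) (Fin m) ℝ)
    (hΓ : IsAsymptoticallyStable Γ) :
    IntegrableOn (fun t : ℝ => exp (t • Γ) * exp (t • Γᵀ)) (Set.Ici 0) ∧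
      Γ * (∫ t in Set.Ici (0 : ℝ), exp (t • Γ) * exp (t • Γᵀ)) +
        (∫ t in Set.Ici (0 : ℝ), exp (t • Γ) * exp (t • Γᵀ)) * Γᵀ = -1 := by
  obtain ⟨c, hc, hdecay⟩ := hΓ.exists_isBigO_exp_mul_exp_transpose
  have hcont : Continuous fun t : ℝ => exp (t • Γ) * exp (t • Γᵀ) :=
    continuous_iff_continuousAt.2 fun t => (hasDerivAt_exp_smul_mul_exp_smul Γ Γᵀ t).continuousAt
  have hint : IntegrableOn (fun t : ℝ => exp (t • Γ) * exp (t • Γᵀ)) (Set.Ici 0) :=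
    integrableOn_Ici_of_isBigO_exp hc hcont.continuousOn hdecay
  have hlim := hdecay.trans_tendsto
    (Real.tendsto_exp_atBot.comp (tendsto_id.const_mul_atTop_of_neg hc))
  refine ⟨hint, ?_⟩
  rw [integral_Ici_eq_integral_Ioi]
  exact mul_integral_exp_mul_exp_add_integral_mul_eq_neg_one
    (hint.mono_set Set.Ioi_subset_Ici_self) hlim
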